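/- Let H/P denote the group presented on the generating set Z by the Peiffer relators a·b·ι((^{θ(a)}b)·a) (a, b ∈ Z) together with the relators a·a⁻¹ (a ∈ Z), and let Υ → H/P be the canonical monoid homomorphism. If d ∈ WDom_Υ(𝔘), then the image of d in H/P is trivial. (In particular, if Π̃ = 𝔘̂, then every identity Y-sequence has trivial image in the free crossed module quotient H/P, which yields asphericity of 𝒫.) -/

import Mathlib

universe u

namespace Wh

variable {X : Type u}

/-- The set of symbols `(ᵘr)^ε` for a presentation with relators `rels`:
`u` is a word of the free group, `r` a relator and `eps` the sign (`true` for `+1`). -/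
structure Sym (X : Type u) (rels : Set (FreeGroup X)) where
  u : FreeGroup X
  r : rels
  eps : Bool

variable {rels : Set (FreeGroup X)}

/-- The formal inverse `(ᵘr)^{-ε}` of a symbol `(ᵘr)^ε`. -/
def Sym.symInv (a : Sym X rels) : Sym X rels := ⟨a.u, a.r, !a.eps⟩

/-- `θ((ᵘr)^ε) = u r^ε u⁻¹`. -/
def Sym.theta (a : Sym X rels) : FreeGroup X :=
  a.u * (if a.eps then (a.r : FreeGroup X) else (a.r : FreeGroup X)⁻¹) * a.u⁻¹

/-- The conjugate `ᵛ((ᵘr)^ε) = (^{vu}r)^ε`. -/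
def Sym.conj (v : FreeGroup X) (a : Sym X rels) : Sym X rels := ⟨v * a.u, a.r, a.eps⟩

/-- The defining relations of the monoid `Υ` : `a ⬝ b = (^{θ(a)}b) ⬝ a`. -/
def upsRel (rels : Set (FreeGroup X)) :
    FreeMonoid (Sym X rels) → FreeMonoid (Sym X rels) → Prop := fun x y =>
  ∃ a b : Sym X rels, x = FreeMonoid.of a * FreeMonoid.of b ∧
    y = FreeMonoid.of (Sym.conj (Sym.theta a) b) * FreeMonoid.of a

/-- The congruence on the free monoid on `Z` generated by the defining relations of `Υ`. -/
def upsCon (rels : Set (FreeGroup X)) : Con (FreeMonoid (Sym X rels)) := conGen (upsRel rels)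

/-- The monoid `Υ` presented on `Z` by the relations `a ⬝ b = (^{θ(a)}b) ⬝ a`. -/
abbrev Ups (rels : Set (FreeGroup X)) := (upsCon rels).Quotient

/-- The canonical epimorphism `σ : FM(Z) → Υ`. -/
def sigma (rels : Set (FreeGroup X)) : FreeMonoid (Sym X rels) →* Ups rels := (upsCon rels).mk'

/-- The submonoid `𝔘` of `Υ` generated by the elements `σ(a)σ(a⁻¹)`, `a ∈ Z`. -/
def UU (rels : Set (FreeGroup X)) : Submonoid (Ups rels) :=
  Submonoid.closure
    {x | ∃ a : Sym X rels, x = sigma rels (FreeMonoid.of a * FreeMonoid.of a.symInv)}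

/-- The monoid homomorphism `θ̄ : Υ → F` induced by `θ`. -/
def thetaBar (rels : Set (FreeGroup X)) : Ups rels →* FreeGroup X :=
  (upsCon rels).lift (FreeMonoid.lift Sym.theta) (by
    apply Con.conGen_le.2
    rintro x y ⟨a, b, rfl, rfl⟩
    simp only [Con.ker_rel, map_mul, FreeMonoid.lift_eval_of]
    simp only [Sym.theta, Sym.conj]
    group)

/-- The relators of the group `𝒢(Υ)` : `a ⬝ b ⬝ ι((^{θ(a)}b) ⬝ a)`. -/
def grels (rels : Set (FreeGroup X)) : Set (FreeGroup (Sym X rels)) :=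
  {x | ∃ a b : Sym X rels, x = FreeGroup.of a * FreeGroup.of b *
      (FreeGroup.of (Sym.conj (Sym.theta a) b) * FreeGroup.of a)⁻¹}

/-- The universal enveloping group `𝒢(Υ)`. -/
abbrev GUps (rels : Set (FreeGroup X)) := PresentedGroup (grels rels)

/-- The canonical monoid homomorphism `μ : Υ → 𝒢(Υ)`. -/
def mu (rels : Set (FreeGroup X)) : Ups rels →* GUps rels :=
  (upsCon rels).lift (FreeMonoid.lift fun a => (PresentedGroup.of a : GUps rels)) (by
    apply Con.conGen_le.2
    rintro x y ⟨a, b, rfl, rfl⟩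
    simp only [Con.ker_rel, map_mul, FreeMonoid.lift_eval_of]
    have h2 : (QuotientGroup.mk (FreeGroup.of a * FreeGroup.of b *
        (FreeGroup.of (Sym.conj (Sym.theta a) b) * FreeGroup.of a)⁻¹) : GUps rels) = 1 :=
      (QuotientGroup.eq_one_iff _).2 (Subgroup.subset_normalClosure ⟨a, b, rfl⟩)
    rw [QuotientGroup.mk_mul, QuotientGroup.mk_inv, QuotientGroup.mk_mul,
      QuotientGroup.mk_mul, mul_inv_eq_one] at h2
    exact h2)

/-- The subgroup `𝔘̂` of `𝒢(Υ)` generated by `μ(𝔘)`. -/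
def UUhat (rels : Set (FreeGroup X)) : Subgroup (GUps rels) :=
  Subgroup.closure (mu rels '' (UU rels : Set (Ups rels)))

/-- The group homomorphism `θ̃ : 𝒢(Υ) → F` induced by `θ`. -/
def thetaTilde (rels : Set (FreeGroup X)) : GUps rels →* FreeGroup X :=
  PresentedGroup.toGroup (f := Sym.theta) (by
    rintro x ⟨a, b, rfl⟩
    simp only [map_mul, map_inv, FreeGroup.lift_apply_of]
    simp only [Sym.theta, Sym.conj]
    group)

/-- Peiffer equivalence `~_𝔘` on `Υ` : the equivalence relation generated by the pairs
`(x, x ⬝ σ(a)σ(a⁻¹))`. -/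
def peifferEquiv (rels : Set (FreeGroup X)) : Ups rels → Ups rels → Prop :=
  Relation.EqvGen fun x y => ∃ a : Sym X rels,
    y = x * sigma rels (FreeMonoid.of a * FreeMonoid.of a.symInv)

/-- The weak dominion of a submonoid `U` of a monoid `S`. -/
def WDom (S : Type u) [Monoid S] (U : Submonoid S) : Set S :=
  {d | ∀ (G : Type u) [Group G] (f g : S →* G), (∀ u ∈ U, f u = g u) → f d = g d}

/-- The `F`-action on `𝒢(Υ)` determined by `ʷ(μσ(a)) = μσ(ʷa)`. -/
def actF (rels : Set (FreeGroup X)) (w : FreeGroup X) : GUps rels →* GUps rels :=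
  PresentedGroup.toGroup (f := fun a => (PresentedGroup.of (Sym.conj w a) : GUps rels)) (by
    rintro x ⟨a, b, rfl⟩
    simp only [map_mul, map_inv, FreeGroup.lift_apply_of]
    have key : Sym.conj w (Sym.conj (Sym.theta a) b) =
        Sym.conj (Sym.theta (Sym.conj w a)) (Sym.conj w b) := by
      obtain ⟨u, r, e⟩ := a
      cases e <;> simp [Sym.conj, Sym.theta, mul_assoc]
    rw [key]
    have h2 : (QuotientGroup.mk (FreeGroup.of (Sym.conj w a) * FreeGroup.of (Sym.conj w b) *
        (FreeGroup.of (Sym.conj (Sym.theta (Sym.conj w a)) (Sym.conj w b)) *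
          FreeGroup.of (Sym.conj w a))⁻¹) : GUps rels) = 1 :=
      (QuotientGroup.eq_one_iff _).2 (Subgroup.subset_normalClosure ⟨_, _, rfl⟩)
    rw [QuotientGroup.mk_mul, QuotientGroup.mk_inv, QuotientGroup.mk_mul,
      QuotientGroup.mk_mul] at h2
    exact h2)


/-- The relators of the free crossed module quotient `H/P`: the Peiffer relators together
with the relators `a ⬝ a⁻¹`, `a ∈ Z`. -/
def hpRels (rels : Set (FreeGroup X)) : Set (FreeGroup (Sym X rels)) :=
  grels rels ∪ {x | ∃ a : Sym X rels, x = FreeGroup.of a * FreeGroup.of a.symInv}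

/-- The group `H/P`. -/
abbrev HP (rels : Set (FreeGroup X)) := PresentedGroup (hpRels rels)

/-- The canonical monoid homomorphism `Υ → H/P`. -/
def nuHP (rels : Set (FreeGroup X)) : Ups rels →* HP rels :=
  (upsCon rels).lift (FreeMonoid.lift fun a => (PresentedGroup.of a : HP rels)) (by
    apply Con.conGen_le.2
    rintro x y ⟨a, b, rfl, rfl⟩
    simp only [Con.ker_rel, map_mul, FreeMonoid.lift_eval_of]
    have h2 : (QuotientGroup.mk (FreeGroup.of a * FreeGroup.of b *
        (FreeGroup.of (Sym.conj (Sym.theta a) b) * FreeGroup.of a)⁻¹) : HP rels) = 1 :=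
      (QuotientGroup.eq_one_iff _).2
        (Subgroup.subset_normalClosure (Or.inl ⟨a, b, rfl⟩))
    rw [QuotientGroup.mk_mul, QuotientGroup.mk_inv, QuotientGroup.mk_mul,
      QuotientGroup.mk_mul, mul_inv_eq_one] at h2
    exact h2)

theorem WDom.map_eq_one {S : Type u} [Monoid S] {U : Submonoid S} {d : S}
    (hd : d ∈ WDom S U) {G : Type u} [Group G] {f : S →* G} (hU : U ≤ MonoidHom.mker f) :
    f d = 1 :=
  hd G f 1 hU

theorem nuHP_sigma_of (a : Sym X rels) :
    nuHP rels (sigma rels (FreeMonoid.of a)) = PresentedGroup.of a :=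
  rfl

theorem nuHP_sigma_of_mul_symInv (a : Sym X rels) :
    nuHP rels (sigma rels (FreeMonoid.of a * FreeMonoid.of a.symInv)) = 1 := by
  rw [map_mul, map_mul, nuHP_sigma_of, nuHP_sigma_of]
  exact PresentedGroup.one_of_mem (Or.inr ⟨a, rfl⟩)

theorem UU_le_mker_nuHP : UU rels ≤ MonoidHom.mker (nuHP rels) :=
  Submonoid.closure_le.2 fun _ ⟨a, ha⟩ => ha ▸ nuHP_sigma_of_mul_symInv a

/-- (iii) ⇒ (i) of Theorem `wdom`: any element of the weak dominion of `𝔘` in `Υ` has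
trivial image in the free crossed module quotient `H/P`. -/
theorem image_trivial_of_mem_WDom (rels : Set (FreeGroup X)) :
    ∀ d ∈ WDom (Ups rels) (UU rels), nuHP rels d = 1 :=
  fun _ hd => WDom.map_eq_one hd UU_le_mker_nuHP

end Wh
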